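/- Let P be a finite set of size P₁, let M ⊆ P with |P \ M| = P₁ − m elements outside M, and let f be a uniformly random function from P to {1,…,T}. For 2 ≤ r ≤ min(T, P₁ − m + 1), the probability that there exist r−1 distinct elements x₁,…,x_{r−1} ∈ P \ M with f(x₁) < f(x₂) < … < f(x_{r−1}) < f(y) for all y ∈ P \ {x₁,…,x_{r−1}}, and f is constant on P \ {x₁,…,x_{r−1}}, equals C(P₁−m, r−1)·(r−1)!·[∑_{j=r−1}^{T−1} C(j−1, r−2)(T−j)]·(1/T)^{P₁}. -/

import Mathlib

open Finset

set_option maxRecDepth 8000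

lemma sumIdentity (k T : ℕ) (h : k + 2 ≤ T) :
    ∑ j ∈ Finset.Icc (k + 1) (T - 1), (j - 1).choose k * (T - j) = T.choose (k + 2) := by
  induction T, h using Nat.le_induction with
  | base =>
    rw [show k + 2 - 1 = k + 1 from rfl, Finset.Icc_self, Finset.sum_singleton]
    simp [Nat.choose_self]
  | succ n hn ih =>
    rw [show n + 1 - 1 = n from rfl]
    have hsplit : ∀ j ∈ Finset.Icc (k + 1) n, (j - 1).choose k * (n + 1 - j)
        = (j - 1).choose k * (n - j) + (j - 1).choose k := by
      intro j hj
      rw [Finset.mem_Icc] at hj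
      rw [show n + 1 - j = (n - j) + 1 from by omega, Nat.mul_add, Nat.mul_one]
    rw [Finset.sum_congr rfl hsplit]
    have hre : ∑ j ∈ Finset.Icc (k + 1) n, (j - 1).choose k
          = ∑ i ∈ Finset.Icc k (n - 1), i.choose k := by
      rw [show Finset.Icc (k + 1) n = (Finset.Icc k (n - 1)).map (addRightEmbedding 1) from ?_,
        Finset.sum_map]
      · simp
      · ext j
        simp only [Finset.mem_map, Finset.mem_Icc, addRightEmbedding_apply]
        constructor
        · rintro ⟨hj1, hj2⟩; exact ⟨j - 1, by omega, by omega⟩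
        · rintro ⟨i, ⟨hi1, hi2⟩, rfl⟩; omega
    have htop : ∑ j ∈ Finset.Icc (k + 1) n, (j - 1).choose k * (n - j)
          = ∑ j ∈ Finset.Icc (k + 1) (n - 1), (j - 1).choose k * (n - j) := by
      have h2 : Finset.Icc (k + 1) n = insert n (Finset.Icc (k + 1) (n - 1)) := by
        ext j; simp only [Finset.mem_Icc, Finset.mem_insert]; omega
      rw [h2, Finset.sum_insert (by simp [Finset.mem_Icc]; omega)]
      simp
    rw [Finset.sum_add_distrib, htop, ih, hre, Nat.sum_Icc_choose,
      show (n - 1) + 1 = n from by omega, Nat.choose_succ_succ' (n) (k + 1)]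
    exact Nat.add_comm _ _

lemma cardStrictMono (k n : ℕ) :
    Fintype.card {v : Fin k → Fin n // StrictMono v} = n.choose k := by
  have e : {v : Fin k → Fin n // StrictMono v} ≃ {s : Finset (Fin n) // s.card = k} := by
    refine ⟨fun v => ⟨Finset.univ.image v.1, by
        rw [Finset.card_image_of_injective _ v.2.injective, Finset.card_univ, Fintype.card_fin]⟩,
      fun s => ⟨s.1.orderEmbOfFin s.2, (s.1.orderEmbOfFin s.2).strictMono⟩, ?_, ?_⟩
    · rintro ⟨v, hv⟩
      exact Subtype.ext (Finset.orderEmbOfFin_unique _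
        (fun x => Finset.mem_image_of_mem v (Finset.mem_univ x)) hv).symm
    · rintro ⟨s, hs⟩
      refine Subtype.ext ?_
      apply Finset.coe_injective
      rw [Finset.coe_image, Finset.coe_univ, Set.image_univ, Finset.range_orderEmbOfFin]
  rw [Fintype.card_congr e, Fintype.card_finset_len, Fintype.card_fin]

lemma cardPairs (k T : ℕ) :
    Nat.card {p : (Fin k → Fin T) × Fin T // StrictMono p.1 ∧ ∀ i, p.1 i < p.2}
      = T.choose (k + 1) := by
  have e : {p : (Fin k → Fin T) × Fin T // StrictMono p.1 ∧ ∀ i, p.1 i < p.2}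
      ≃ {w : Fin (k + 1) → Fin T // StrictMono w} := by
    refine ⟨fun p => ⟨Fin.snoc p.1.1 p.1.2, ?_⟩,
        fun w => ⟨(Fin.init w.1, w.1 (Fin.last k)), ?_, ?_⟩, ?_, ?_⟩
    · intro i j hij
      rcases Fin.eq_castSucc_or_eq_last j with ⟨j', rfl⟩ | rfl
      · rcases Fin.eq_castSucc_or_eq_last i with ⟨i', rfl⟩ | rfl
        · simp only [Fin.snoc_castSucc]
          exact p.2.1 (Fin.castSucc_lt_castSucc_iff.mp hij)
        · exact absurd hij (Fin.castSucc_lt_last j').asymm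
      · rcases Fin.eq_castSucc_or_eq_last i with ⟨i', rfl⟩ | rfl
        · simp only [Fin.snoc_castSucc, Fin.snoc_last]
          exact p.2.2 i'
        · exact absurd hij (lt_irrefl _)
    · intro i j hij
      exact w.2 (Fin.castSucc_lt_castSucc_iff.mpr hij)
    · intro i
      exact w.2 (Fin.castSucc_lt_last i)
    · rintro ⟨⟨v, c⟩, h⟩
      refine Subtype.ext (Prod.ext ?_ ?_)
      · simp only [Fin.init_snoc]
      · simp only [Fin.snoc_last]
    · rintro ⟨w, hw⟩
      exact Subtype.ext (Fin.snoc_init_self w)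
  rw [Nat.card_congr e, Nat.card_eq_fintype_card, cardStrictMono]

lemma cardX (A : Type) [Fintype A] [DecidableEq A] (k : ℕ) (M : Finset A) :
    Nat.card {x : Fin k → A // Function.Injective x ∧ ∀ i, x i ∉ M}
      = (Fintype.card A - M.card).descFactorial k := by
  have e : {x : Fin k → A // Function.Injective x ∧ ∀ i, x i ∉ M} ≃ (Fin k ↪ {a : A // a ∉ M}) :=
    { toFun := fun x => ⟨fun i => ⟨x.1 i, x.2.2 i⟩, fun i j h => x.2.1 (congrArg Subtype.val h)⟩
      invFun := fun e => ⟨fun i => (e i).1,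
        fun i j h => e.injective (Subtype.ext h), fun i => (e i).2⟩
      left_inv := fun x => rfl
      right_inv := fun e => by ext i; rfl }
  rw [Nat.card_congr e, Nat.card_eq_fintype_card, Fintype.card_embedding_eq, Fintype.card_fin,
    Fintype.card_subtype_compl, Fintype.card_coe]

noncomputable def auxG {A : Type} {k T : ℕ} (q : (Fin k → A) × ((Fin k → Fin T) × Fin T)) :
    A → Fin T :=
  Function.extend q.1 q.2.1 (fun _ => q.2.2)

lemma cardEvent (A : Type) [Fintype A] [DecidableEq A] (T k : ℕ) (M : Finset A)
    (hk : k < Fintype.card A) :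
    Nat.card {f : A → Fin T // ∃ x : Fin k → A, Function.Injective x ∧ (∀ i, x i ∉ M) ∧
        (∀ i j : Fin k, i < j → f (x i) < f (x j)) ∧
        (∀ i : Fin k, ∀ y : A, y ∉ Set.range x → f (x i) < f y) ∧
        (∀ y z : A, y ∉ Set.range x → z ∉ Set.range x → f y = f z)}
      = Nat.card {q : (Fin k → A) × ((Fin k → Fin T) × Fin T) //
        (Function.Injective q.1 ∧ ∀ i, q.1 i ∉ M) ∧ (StrictMono q.2.1 ∧ ∀ i, q.2.1 i < q.2.2)} := by
  classical
  have hb : ∀ x : Fin k → A, ∃ b, b ∉ Set.range x := by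
    intro x
    by_contra hcon
    push_neg at hcon
    have h2 := Fintype.card_le_of_surjective x (fun a => hcon a)
    rw [Fintype.card_fin] at h2
    omega
  have hGa : ∀ q : (Fin k → A) × ((Fin k → Fin T) × Fin T),
      Function.Injective q.1 → ∀ i, auxG q (q.1 i) = q.2.1 i := by
    intro q hinj i
    exact hinj.extend_apply _ _ _
  have hGb : ∀ q : (Fin k → A) × ((Fin k → Fin T) × Fin T),
      ∀ a, a ∉ Set.range q.1 → auxG q a = q.2.2 := by
    intro q a ha
    exact Function.extend_apply' _ _ _ (by simpa [Set.mem_range] using ha)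
  symm
  apply Nat.card_eq_of_bijective (f := fun q => (⟨auxG q.1,
    q.1.1, q.2.1.1, q.2.1.2,
    (fun i j hij => by rw [hGa q.1 q.2.1.1, hGa q.1 q.2.1.1]; exact q.2.2.1 hij),
    (fun i y hy => by rw [hGa q.1 q.2.1.1, hGb q.1 y hy]; exact q.2.2.2 i),
    (fun y z hy hz => by rw [hGb q.1 y hy, hGb q.1 z hz])⟩))
  have hub : ∀ q : (Fin k → A) × ((Fin k → Fin T) × Fin T), Function.Injective q.1 →
      (∀ i, q.2.1 i < q.2.2) → ∀ a, auxG q a ≤ q.2.2 := by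
    intro q hinj hlt a
    by_cases h : a ∈ Set.range q.1
    · obtain ⟨i, rfl⟩ := h
      rw [hGa q hinj i]
      exact (hlt i).le
    · rw [hGb q a h]
  have hmax : ∀ q q' : (Fin k → A) × ((Fin k → Fin T) × Fin T), Function.Injective q'.1 →
      (∀ i, q'.2.1 i < q'.2.2) → auxG q = auxG q' → q.2.2 ≤ q'.2.2 := by
    intro q q' hinj' hlt' heq
    obtain ⟨b, hbr⟩ := hb q.1
    have h1 : q.2.2 = auxG q' b := by rw [← heq, hGb q b hbr]
    rw [h1]
    exact hub q' hinj' hlt' b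
  have key : ∀ q q' : (Fin k → A) × ((Fin k → Fin T) × Fin T),
      Function.Injective q.1 → (∀ i, q.2.1 i < q.2.2) →
      auxG q = auxG q' → q.2.2 = q'.2.2 → Set.range q.1 ⊆ Set.range q'.1 := by
    rintro q q' hinj hlt hfe hc a ⟨i, rfl⟩
    by_contra hna
    have h1 : auxG q' (q.1 i) = q'.2.2 := hGb q' _ hna
    rw [← hfe, hGa q hinj i, ← hc] at h1
    exact absurd h1 (hlt i).ne
  constructor
  · rintro ⟨q, ⟨hinj, hmem⟩, hsm, hlt⟩ ⟨q', ⟨hinj', hmem'⟩, hsm', hlt'⟩ heq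
    have hfe : auxG q = auxG q' := congrArg Subtype.val heq
    have hc : q.2.2 = q'.2.2 :=
      le_antisymm (hmax q q' hinj' hlt' hfe) (hmax q' q hinj hlt hfe.symm)
    have hrange : Set.range q.1 = Set.range q'.1 :=
      Set.Subset.antisymm (key q q' hinj hlt hfe hc) (key q' q hinj' hlt' hfe.symm hc.symm)
    have hrg : Set.range q.2.1 = Set.range q'.2.1 := by
      have e1 : q.2.1 = auxG q ∘ q.1 := funext fun i => (hGa q hinj i).symm
      have e2 : q'.2.1 = auxG q' ∘ q'.1 := funext fun i => (hGa q' hinj' i).symm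
      rw [e1, e2, Set.range_comp, Set.range_comp, hfe, hrange]
    have hw : WellFoundedLT (Fin k) := inferInstance
    have hveq : q.2.1 = q'.2.1 :=
      (@StrictMono.range_inj (Fin k) (Fin T) inferInstance inferInstance hw _ _ hsm hsm').mp hrg
    have hx : q.1 = q'.1 := by
      funext i
      have h1 : q'.1 i ∈ Set.range q.1 := hrange ▸ Set.mem_range_self i
      obtain ⟨j, hj⟩ := h1
      have h2 : q.2.1 j = q.2.1 i := by
        rw [← hGa q hinj j, hj, hfe, hGa q' hinj' i, ← hveq]
      have h3 : j = i := hsm.injective h2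
      rw [← hj, h3]
    exact Subtype.ext (Prod.ext hx (Prod.ext hveq hc))
  · rintro ⟨f, x, hinj, hmem, h3, h4, h5⟩
    obtain ⟨b, hbr⟩ := hb x
    refine ⟨⟨(x, fun i => f (x i), f b), ⟨hinj, hmem⟩,
      (fun i j hij => h3 i j hij), (fun i => h4 i b hbr)⟩, ?_⟩
    apply Subtype.ext
    show auxG (x, fun i => f (x i), f b) = f
    funext a
    by_cases h : a ∈ Set.range x
    · obtain ⟨i, rfl⟩ := h
      exact hGa (x, fun i => f (x i), f b) hinj i
    · rw [hGb (x, fun i => f (x i), f b) a h]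
      exact h5 b a hbr h

theorem stmt14 (A : Type) [Fintype A] [DecidableEq A] (P₁ m r T : ℕ)
    [NeZero T] (hA : Fintype.card A = P₁) (M : Finset A) (hM : M.card = m)
    (hm : 1 ≤ m) (hr : 2 ≤ r) (hrT : r ≤ min T (P₁ - m + 1)) :
    (PMF.uniformOfFintype (A → Fin T)).toOuterMeasure
      {f | ∃ x : Fin (r - 1) → A, Function.Injective x ∧ (∀ i, x i ∉ M) ∧
        (∀ i j : Fin (r - 1), i < j → f (x i) < f (x j)) ∧
        (∀ i : Fin (r - 1), ∀ y : A, y ∉ Set.range x → f (x i) < f y) ∧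
        (∀ y z : A, y ∉ Set.range x → z ∉ Set.range x → f y = f z)}
      = ((P₁ - m).choose (r - 1) : ENNReal) * ((Nat.factorial (r - 1)) : ENNReal) *
        ((∑ j ∈ Finset.Icc (r - 1) (T - 1),
            (j - 1).choose (r - 2) * (T - j) : ℕ) : ENNReal) *
        (1 / (T : ENNReal)) ^ P₁ := by
  obtain ⟨k2, rfl⟩ : ∃ k2, r = k2 + 2 := ⟨r - 2, by omega⟩
  have hT : k2 + 2 ≤ T := le_trans hrT (min_le_left _ _)
  have hPm : k2 + 2 ≤ P₁ - m + 1 := le_trans hrT (min_le_right _ _)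
  have hmP : m ≤ P₁ := by
    rw [← hM, ← hA, ← Finset.card_univ]
    exact Finset.card_le_card (Finset.subset_univ M)
  have hk : k2 + 1 < Fintype.card A := by rw [hA]; omega
  rw [PMF.toOuterMeasure_uniformOfFintype_apply]
  simp only [← Nat.card_eq_fintype_card]
  have h1 : Nat.card {f : A → Fin T |
      ∃ x : Fin (k2 + 2 - 1) → A, Function.Injective x ∧ (∀ i, x i ∉ M) ∧
        (∀ i j : Fin (k2 + 2 - 1), i < j → f (x i) < f (x j)) ∧
        (∀ i : Fin (k2 + 2 - 1), ∀ y : A, y ∉ Set.range x → f (x i) < f y) ∧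
        (∀ y z : A, y ∉ Set.range x → z ∉ Set.range x → f y = f z)}
      = (P₁ - m).descFactorial (k2 + 1) * T.choose (k2 + 2) := by
    have h2 := cardEvent A T (k2 + 1) M hk
    have h3 : Nat.card {q : (Fin (k2 + 1) → A) × ((Fin (k2 + 1) → Fin T) × Fin T) //
        (Function.Injective q.1 ∧ ∀ i, q.1 i ∉ M) ∧
          (StrictMono q.2.1 ∧ ∀ i, q.2.1 i < q.2.2)}
        = (P₁ - m).descFactorial (k2 + 1) * T.choose (k2 + 2) := by
      rw [Nat.card_congr (Equiv.subtypeProdEquivProd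
        (p := fun x : Fin (k2 + 1) → A => Function.Injective x ∧ ∀ i, x i ∉ M)
        (q := fun y : (Fin (k2 + 1) → Fin T) × Fin T => StrictMono y.1 ∧ ∀ i, y.1 i < y.2)),
        Nat.card_prod, cardX, cardPairs, hA, hM]
    exact h2.trans h3
  have hfun : Nat.card (A → Fin T) = T ^ P₁ := by
    simp [Nat.card_eq_fintype_card, hA]
  rw [h1, hfun, show k2 + 2 - 1 = k2 + 1 from rfl, show k2 + 2 - 2 = k2 from rfl,
    sumIdentity k2 T hT, div_eq_mul_inv, one_div, ← ENNReal.inv_pow, ← Nat.cast_pow]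
  congr 1
  rw [Nat.descFactorial_eq_factorial_mul_choose]
  push_cast
  ring
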